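/- Let α ≥ 3, let d ≥ max{4α, 2^{12} − 1} with d not of the form 2^r − 1 for any integer r, and set r = ⌊log₂(d+1)⌋. Then for all integers n ≥ 4d + 2^r, g_d(n) ≥ Q_{d−α}^{(1)}(n). -/

import Mathlib

/-!
Write `M = d - α + 3` and `r = ⌊log₂ (d+1)⌋`. We map every partition of `n` into parts
`≡ ±1 (mod M)` injectively to a partition of `n` counted by `g_d`. Copies of `M - 1` are paired
into parts `d + 8` and copies of `M + 1` into parts `d + 16`; an unpaired `M - 1` becomes `d + 2`,
an unpaired `M + 1` becomes `d + 4`, and if both are unpaired they merge into `d + 32`. The parts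
`≥ 2M - 1`, taken in increasing order, go to the numbers `≥ d + 64` lying in the residue classes
`d + 2^6, …, d + 2^(r-2), 1 (mod 2d)`, taken in increasing order: there are `r - 6 ≥ 6` such classes
per `2d`, against two classes per `M ≥ 3d/4`, so each of these parts shrinks by at least `α`, as
does each pair. Only an unpaired part can grow, by at most `α`, so unless nothing shrinks the image
is not heavier than the partition (and if nothing shrinks it weighs at most `d + 32 ≤ n`); the
difference is made up by parts `1`. The restricted class `d + 2^(r-1)` is never used.
-/

/-- `QNum b d n` is the number of partitions of `n` into parts congruent to
`b` or `-b` modulo `d + 3`. -/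
noncomputable def QNum (b d n : ℕ) : ℕ :=
  Nat.card {p : n.Partition //
    ∀ x ∈ p.parts, x % (d + 3) = b % (d + 3) ∨ (x + b) % (d + 3) = 0}

/-- `gNum d n`: with `r = ⌊log₂ (d+1)⌋`, the number of partitions of `n` into parts
congruent to one of `1, d+2, d+4, d+8, …, d+2^(r-2)` modulo `2d`, in which additionally
parts congruent to `d + 2^(r-1)` modulo `2d` may appear, each such part at most once. -/
noncomputable def gNum (d n : ℕ) : ℕ :=
  Nat.card {p : n.Partition //
    (∀ x ∈ p.parts, x % (2 * d) = 1 ∨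
      (∃ j, 1 ≤ j ∧ j ≤ Nat.log 2 (d + 1) - 2 ∧ x % (2 * d) = d + 2 ^ j) ∨
      x % (2 * d) = d + 2 ^ (Nat.log 2 (d + 1) - 1)) ∧
    ∀ x ∈ p.parts, x % (2 * d) = d + 2 ^ (Nat.log 2 (d + 1) - 1) → p.parts.count x ≤ 1}

namespace GDominatesQ

lemma eq_of_map_eq_of_injOn {ι κ : Type*} [Nonempty ι] {f : ι → κ} {S : Set ι}
    (hf : S.InjOn f) {s t : Multiset ι} (hs : ∀ x ∈ s, x ∈ S) (ht : ∀ x ∈ t, x ∈ S)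
    (h : s.map f = t.map f) : s = t := by
  have hinv : ∀ u : Multiset ι, (∀ x ∈ u, x ∈ S) → (u.map f).map (Function.invFunOn f S) = u :=
    fun u hu => by
      rw [Multiset.map_map]
      exact (Multiset.map_congr rfl fun x hx => hf.leftInvOn_invFunOn (hu x hx)).trans
        (Multiset.map_id' u)
  rw [← hinv s hs, ← hinv t ht, h]

lemma eq_and_eq_of_add_eq_add {ι : Type*} {p : ι → Prop} [DecidablePred p]
    {s₁ s₂ t₁ t₂ : Multiset ι} (hs₁ : ∀ x ∈ s₁, p x) (hs₂ : ∀ x ∈ s₂, p x)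
    (ht₁ : ∀ x ∈ t₁, ¬ p x) (ht₂ : ∀ x ∈ t₂, ¬ p x) (h : s₁ + t₁ = s₂ + t₂) :
    s₁ = s₂ ∧ t₁ = t₂ := by
  have hp := congrArg (Multiset.filter p) h
  have hnp := congrArg (Multiset.filter (fun x => ¬ p x)) h
  simp only [Multiset.filter_add, Multiset.filter_eq_self.mpr hs₁, Multiset.filter_eq_self.mpr hs₂,
    Multiset.filter_eq_nil.mpr ht₁, Multiset.filter_eq_nil.mpr ht₂] at hp
  simp only [Multiset.filter_add, Multiset.filter_eq_self.mpr ht₁, Multiset.filter_eq_self.mpr ht₂,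
    Multiset.filter_eq_nil.mpr (fun x hx => not_not.mpr (hs₁ x hx)),
    Multiset.filter_eq_nil.mpr (fun x hx => not_not.mpr (hs₂ x hx))] at hnp
  simpa using And.intro hp hnp

lemma sum_map_add_le {f : ℕ → ℕ} {c : ℕ} {B : Multiset ℕ} (h : ∀ x ∈ B, f x + c ≤ x) :
    (B.map f).sum + c * B.card ≤ B.sum := by
  have := Multiset.sum_map_le_sum_map (fun x => f x + c) id h
  rwa [Multiset.sum_map_add, Multiset.map_const', Multiset.sum_replicate, smul_eq_mul,
    Multiset.map_id, mul_comm] at this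

lemma card_le_card_of_injOn {n : ℕ} {p q : Multiset ℕ → Prop} (f : Multiset ℕ → Multiset ℕ)
    (hpos : ∀ μ : n.Partition, p μ.parts → ∀ x ∈ f μ.parts, 0 < x)
    (hsum : ∀ μ : n.Partition, p μ.parts → (f μ.parts).sum = n)
    (hq : ∀ μ : n.Partition, p μ.parts → q (f μ.parts))
    (hinj : ∀ μ ν : n.Partition, p μ.parts → p ν.parts → f μ.parts = f ν.parts →
      μ.parts = ν.parts) :
    Nat.card {μ : n.Partition // p μ.parts} ≤ Nat.card {μ : n.Partition // q μ.parts} :=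
  Nat.card_le_card_of_injective
    (fun μ => ⟨⟨f μ.1.parts, hpos μ.1 μ.2 _, hsum μ.1 μ.2⟩, hq μ.1 μ.2⟩)
    fun μ ν h => Subtype.ext <| Nat.Partition.ext <|
      hinj μ.1 ν.1 μ.2 ν.2 (congrArg (fun κ => κ.1.parts) h)

variable {d R M α : ℕ}

lemma exists_eq_mul_add (hR : 0 < R) (m : ℕ) : ∃ q i, i < R ∧ m = R * q + i :=
  ⟨m / R, m % R, Nat.mod_lt m hR, (Nat.div_add_mod m R).symm⟩

/-- For `2 ^ (R + 4) < d`, `slot d R m` is the `m`-th number (counting from `0`) that is at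
least `d + 64` and congruent mod `2d` to one of `d + 2^6 < d + 2^7 < ⋯ < d + 2^(R+4) < 2d + 1`. -/
def slot (d R m : ℕ) : ℕ :=
  2 * (m / R) * d + if m % R = R - 1 then 2 * d + 1 else d + 2 ^ (m % R + 6)

lemma slot_mul_add {q i : ℕ} (hi : i < R) :
    slot d R (R * q + i) = 2 * q * d + if i = R - 1 then 2 * d + 1 else d + 2 ^ (i + 6) := by
  simp only [slot, Nat.mul_add_div (show 0 < R by omega), Nat.div_eq_of_lt hi, add_zero,
    Nat.mul_add_mod, Nat.mod_eq_of_lt hi]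

lemma slot_lt_slot_succ (hR : 0 < R) (hd : 2 ^ (R + 4) < d) (m : ℕ) :
    slot d R m < slot d R (m + 1) := by
  obtain ⟨q, i, hi, rfl⟩ := exists_eq_mul_add hR m
  rcases Nat.lt_or_ge (i + 1) R with hi' | hi'
  · have hmono : 2 ^ (i + 6) < 2 ^ (i + 1 + 6) := Nat.pow_lt_pow_right (by norm_num) (by omega)
    have hle : 2 ^ (i + 6) ≤ 2 ^ (R + 4) := Nat.pow_le_pow_right (by norm_num) (by omega)
    rw [add_assoc, slot_mul_add hi, slot_mul_add hi']
    split_ifs <;> omega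
  · have hwrap : R * q + i + 1 = R * (q + 1) + 0 := by rw [mul_add, mul_one]; omega
    rw [hwrap, slot_mul_add hi, slot_mul_add hR, if_pos (by omega),
      show 2 * (q + 1) * d = 2 * q * d + 2 * d by ring]
    have : 0 < d := lt_of_le_of_lt (Nat.zero_le _) hd
    split_ifs <;> omega

lemma slot_strictMono (hR : 0 < R) (hd : 2 ^ (R + 4) < d) : StrictMono (slot d R) :=
  strictMono_nat_of_lt_succ (slot_lt_slot_succ hR hd)

lemma le_slot (hd : 63 ≤ d) (m : ℕ) : d + 64 ≤ slot d R m := by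
  have : 2 ^ 6 ≤ 2 ^ (m % R + 6) := Nat.pow_le_pow_right (by norm_num) (by omega)
  unfold slot
  split_ifs <;> omega

lemma slot_mod (hR : 0 < R) (hd : 2 ^ (R + 4) < d) (m : ℕ) :
    slot d R m % (2 * d) = 1 ∨
      ∃ j, 6 ≤ j ∧ j ≤ R + 4 ∧ slot d R m % (2 * d) = d + 2 ^ j := by
  obtain ⟨q, i, hi, rfl⟩ := exists_eq_mul_add hR m
  rw [slot_mul_add hi, add_comm, show 2 * q * d = q * (2 * d) by ring,
    Nat.add_mul_mod_self_right]
  split_ifs with h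
  · left
    have : 0 < d := lt_of_le_of_lt (Nat.zero_le _) hd
    rw [show 2 * d + 1 = 1 + 1 * (2 * d) by ring, Nat.add_mul_mod_self_right]
    exact Nat.mod_eq_of_lt (by omega)
  · have : 2 ^ (i + 6) ≤ 2 ^ (R + 4) := Nat.pow_le_pow_right (by norm_num) (by omega)
    exact .inr ⟨i + 6, by omega, by omega, Nat.mod_eq_of_lt (by omega)⟩

lemma slot_add_le {m k : ℕ} (hR : 6 ≤ R) (hd : 2 ^ (R + 6) ≤ d) (hα : 4 * α ≤ d)
    (hM : M + α = d + 3) (hk : m + 3 ≤ 2 * k) : slot d R m + α + 1 ≤ k * M := by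
  obtain ⟨q, i, hi, rfl⟩ := exists_eq_mul_add (by omega : 0 < R) m
  have h6q : 6 * q ≤ R * q := Nat.mul_le_mul_right q hR
  rw [slot_mul_add hi]
  split_ifs with h
  · have hk' : 3 * q + 4 ≤ k := by omega
    nlinarith
  · have hk' : 3 * q + 2 ≤ k := by omega
    have : 2 ^ (i + 6) * 4 ≤ 2 ^ (R + 6) := by
      calc 2 ^ (i + 6) * 4 = 2 ^ (i + 8) := by ring
        _ ≤ 2 ^ (R + 6) := Nat.pow_le_pow_right (by norm_num) (by omega)
    nlinarith

def IsQPart (M x : ℕ) : Prop := x ≡ 1 [MOD M] ∨ x + 1 ≡ 0 [MOD M]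

lemma IsQPart.exists_eq (hM : 2 ≤ M) {s : ℕ} (hs : IsQPart M s) :
    ∃ k, s = k * M + 1 ∨ s + 1 = k * M := by
  rcases hs with h | h
  · refine ⟨s / M, .inl ?_⟩
    have := Nat.div_add_mod s M
    rw [h, Nat.one_mod_eq_one.mpr (by omega)] at this
    linarith
  · obtain ⟨k, hk⟩ := (Nat.modEq_zero_iff_dvd.mp h)
    exact ⟨k, .inr (by rw [hk, mul_comm])⟩

lemma IsQPart.eq_or_eq_or_eq_or_le (hM : 3 ≤ M) {x : ℕ} (hx : IsQPart M x) :
    x = 1 ∨ x = M - 1 ∨ x = M + 1 ∨ 2 * M ≤ x + 1 := by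
  obtain ⟨k, hk | hk⟩ := hx.exists_eq (by omega)
  · rcases Nat.lt_or_ge k 2 with h | h
    · interval_cases k <;> omega
    · right; right; right; nlinarith
  · rcases Nat.lt_or_ge k 2 with h | h
    · interval_cases k <;> omega
    · right; right; right; nlinarith

/-- The position of `s` in the increasing list `2M - 1, 2M + 1, 3M - 1, 3M + 1, …` of the parts
`≡ ±1 (mod M)` that are at least `2M - 1`; `bigPart` reads the list. -/
def bigIndex (M s : ℕ) : ℕ := 2 * ((s + 1) / M) - if s % M = 1 then 3 else 4

def bigPart (M m : ℕ) : ℕ := if m % 2 = 1 then (m + 4) / 2 * M + 1 else (m + 4) / 2 * M - 1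

lemma bigPart_bigIndex (hM : 3 ≤ M) {s : ℕ} (hs : IsQPart M s) (hbig : 2 * M ≤ s + 1) :
    bigPart M (bigIndex M s) = s := by
  obtain ⟨k, hk | hk⟩ := hs.exists_eq (by omega)
  · have hk2 : 2 ≤ k := by nlinarith
    have hdiv : (s + 1) / M = k := by
      rw [hk, add_assoc, add_comm, Nat.add_mul_div_right _ _ (by omega),
        Nat.div_eq_of_lt (by omega), zero_add]
    have hmod : s % M = 1 := by
      rw [hk, add_comm, Nat.add_mul_mod_self_right, Nat.mod_eq_of_lt (by omega)]
    rw [bigIndex, hdiv, if_pos hmod, bigPart, if_pos (by omega),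
      show (2 * k - 3 + 4) / 2 = k by omega, hk]
  · have hk2 : 2 ≤ k := by nlinarith
    have hdiv : (s + 1) / M = k := by
      rw [hk, Nat.mul_div_cancel _ (by omega)]
    have hmod : s % M ≠ 1 := by
      have hkM : M ≤ k * M := by nlinarith
      have : s = (M - 1) + (k - 1) * M := by rw [Nat.sub_one_mul]; omega
      rw [this, Nat.add_mul_mod_self_right, Nat.mod_eq_of_lt (by omega)]
      omega
    rw [bigIndex, hdiv, if_neg hmod, bigPart, if_neg (by omega),
      show (2 * k - 4 + 4) / 2 = k by omega]
    omega

lemma bigIndex_add_three_le (hM : 0 < M) {s : ℕ} (hbig : 2 * M ≤ s + 1) :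
    bigIndex M s + 3 ≤ 2 * ((s + 1) / M) := by
  have : 2 ≤ (s + 1) / M := (Nat.le_div_iff_mul_le hM).mpr (by linarith)
  unfold bigIndex
  split_ifs <;> omega

def encodeBig (d R M s : ℕ) : ℕ := slot d R (bigIndex M s)

lemma encodeBig_add_le {s : ℕ} (hR : 6 ≤ R) (hd : 2 ^ (R + 6) ≤ d) (hα : 4 * α ≤ d)
    (hM : M + α = d + 3) (hbig : 2 * M ≤ s + 1) : encodeBig d R M s + α ≤ s := by
  have hk := bigIndex_add_three_le (by omega : 0 < M) hbig
  have := slot_add_le hR hd hα hM hk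
  have := Nat.div_mul_le_self (s + 1) M
  unfold encodeBig
  omega

lemma encodeBig_injOn (hR : 0 < R) (hd : 2 ^ (R + 4) < d) (hM : 3 ≤ M) :
    Set.InjOn (encodeBig d R M) {s | IsQPart M s ∧ 2 * M ≤ s + 1} := by
  intro s hs t ht hst
  rw [← bigPart_bigIndex hM hs.1 hs.2, ← bigPart_bigIndex hM ht.1 ht.2,
    (slot_strictMono hR hd).injective hst]

open Multiset in
def smallCode (d a b : ℕ) : Multiset ℕ :=
  replicate (a / 2) (d + 8) + replicate (b / 2) (d + 16) +
    if a % 2 = 1 ∧ b % 2 = 1 then {d + 32}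
    else replicate (a % 2) (d + 2) + replicate (b % 2) (d + 4)

lemma count_smallCode_left (a b : ℕ) :
    2 * (smallCode d a b).count (d + 8) + (smallCode d a b).count (d + 2)
      + (smallCode d a b).count (d + 32) = a := by
  unfold smallCode
  split_ifs <;> simp [Multiset.count_replicate] <;> omega

lemma count_smallCode_right (a b : ℕ) :
    2 * (smallCode d a b).count (d + 16) + (smallCode d a b).count (d + 4)
      + (smallCode d a b).count (d + 32) = b := by
  unfold smallCode
  split_ifs <;> simp [Multiset.count_replicate] <;> omega

lemma smallCode_injective {a b a' b' : ℕ} (h : smallCode d a b = smallCode d a' b') :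
    a = a' ∧ b = b' := by
  constructor
  · rw [← count_smallCode_left (d := d) a b, h, count_smallCode_left]
  · rw [← count_smallCode_right (d := d) a b, h, count_smallCode_right]

lemma mem_smallCode {a b x : ℕ} (hx : x ∈ smallCode d a b) :
    ∃ j, 1 ≤ j ∧ j ≤ 5 ∧ x = d + 2 ^ j := by
  simp only [smallCode, Multiset.mem_add, Multiset.mem_replicate] at hx
  split_ifs at hx
  · rcases hx with (⟨_, rfl⟩ | ⟨_, rfl⟩) | hx
    · exact ⟨3, by norm_num⟩
    · exact ⟨4, by norm_num⟩
    · exact ⟨5, by norm_num, by norm_num, by simpa using hx⟩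
  · simp only [Multiset.mem_add, Multiset.mem_replicate] at hx
    rcases hx with (⟨_, rfl⟩ | ⟨_, rfl⟩) | ⟨_, rfl⟩ | ⟨_, rfl⟩
    · exact ⟨3, by norm_num⟩
    · exact ⟨4, by norm_num⟩
    · exact ⟨1, by norm_num⟩
    · exact ⟨2, by norm_num⟩

lemma smallCode_sum_add_le (hM : M + α = d + 3) (hα : 3 * α + 26 ≤ d) (a b : ℕ) :
    (smallCode d a b).sum + α * (a / 2 + b / 2) ≤ a * (M - 1) + b * (M + 1) + α := by
  have ha : a * (M - 1) = a / 2 * (2 * (M - 1)) + a % 2 * (M - 1) := by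
    rw [← mul_assoc, mul_comm (a / 2), ← add_mul, Nat.div_add_mod]
  have hb : b * (M + 1) = b / 2 * (2 * (M + 1)) + b % 2 * (M + 1) := by
    rw [← mul_assoc, mul_comm (b / 2), ← add_mul, Nat.div_add_mod]
  have hpa : a / 2 * (d + 8) + α * (a / 2) ≤ a / 2 * (2 * (M - 1)) := by
    rw [mul_comm α, ← mul_add]; exact Nat.mul_le_mul_left _ (by omega)
  have hpb : b / 2 * (d + 16) + α * (b / 2) ≤ b / 2 * (2 * (M + 1)) := by
    rw [mul_comm α, ← mul_add]; exact Nat.mul_le_mul_left _ (by omega)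
  have hα2 : α * (a / 2 + b / 2) = α * (a / 2) + α * (b / 2) := mul_add _ _ _
  simp only [smallCode, Multiset.sum_add, Multiset.sum_replicate, smul_eq_mul]
  split_ifs with h
  · rw [h.1] at ha
    rw [h.2] at hb
    simp only [Multiset.sum_singleton]
    omega
  · simp only [Multiset.sum_add, Multiset.sum_replicate, smul_eq_mul]
    have : a % 2 < 2 := Nat.mod_lt _ (by norm_num)
    have : b % 2 < 2 := Nat.mod_lt _ (by norm_num)
    interval_cases hpa' : a % 2 <;> interval_cases hpb' : b % 2 <;> omega

lemma smallCode_sum_le {a b : ℕ} (ha : a < 2) (hb : b < 2) :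
    (smallCode d a b).sum ≤ d + 32 := by
  interval_cases a <;> interval_cases b <;> simp [smallCode]

def bigParts (M : ℕ) (P : Multiset ℕ) : Multiset ℕ := P.filter (fun x => 2 * M ≤ x + 1)

open Multiset in
lemma eq_replicate_add_bigParts (hM : 3 ≤ M) {P : Multiset ℕ} (hQ : ∀ x ∈ P, IsQPart M x) :
    P = replicate (P.count 1) 1 + replicate (P.count (M - 1)) (M - 1)
      + replicate (P.count (M + 1)) (M + 1) + bigParts M P := by
  ext x
  simp only [count_add, count_replicate, bigParts, count_filter]
  by_cases hx : x ∈ P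
  · rcases (hQ x hx).eq_or_eq_or_eq_or_le hM with rfl | rfl | rfl | h <;>
      split_ifs <;> omega
  · rw [count_eq_zero.mpr hx]
    split_ifs <;> subst_vars <;> simp [count_eq_zero.mpr hx] <;> omega

lemma sum_eq_of_isQPart (hM : 3 ≤ M) {P : Multiset ℕ} (hQ : ∀ x ∈ P, IsQPart M x) :
    P.sum = P.count 1 + P.count (M - 1) * (M - 1) + P.count (M + 1) * (M + 1)
      + (bigParts M P).sum := by
  conv_lhs => rw [eq_replicate_add_bigParts hM hQ]
  simp [Multiset.sum_replicate]

def code (d R M : ℕ) (P : Multiset ℕ) : Multiset ℕ :=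
  smallCode d (P.count (M - 1)) (P.count (M + 1)) + (bigParts M P).map (encodeBig d R M)

def encode (d R M : ℕ) (P : Multiset ℕ) : Multiset ℕ :=
  code d R M P + Multiset.replicate (P.sum - (code d R M P).sum) 1

lemma code_sum_le (hR : 6 ≤ R) (hd : 2 ^ (R + 6) ≤ d) (hα : 4 * α ≤ d) (hM : M + α = d + 3)
    {P : Multiset ℕ} (hQ : ∀ x ∈ P, IsQPart M x) (hP : d + 32 ≤ P.sum) :
    (code d R M P).sum ≤ P.sum := by
  have hd12 : 2 ^ 12 ≤ d := le_trans (Nat.pow_le_pow_right (by norm_num) (by omega)) hd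
  have hsmall := smallCode_sum_add_le hM (by omega) (P.count (M - 1)) (P.count (M + 1))
  have hbig : ((bigParts M P).map (encodeBig d R M)).sum + α * (bigParts M P).card
      ≤ (bigParts M P).sum :=
    sum_map_add_le fun s hs => encodeBig_add_le hR hd hα hM (Multiset.mem_filter.mp hs).2
  have hsum := sum_eq_of_isQPart (by omega) hQ
  rw [code, Multiset.sum_add]
  by_cases h0 : P.count (M - 1) / 2 + P.count (M + 1) / 2 + (bigParts M P).card = 0
  · rw [Multiset.card_eq_zero.mp (by omega : (bigParts M P).card = 0), Multiset.map_zero,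
      Multiset.sum_zero, add_zero]
    exact le_trans (smallCode_sum_le (by omega) (by omega)) hP
  · have : α ≤ α * (P.count (M - 1) / 2 + P.count (M + 1) / 2 + (bigParts M P).card) :=
      Nat.le_mul_of_pos_right α (Nat.pos_of_ne_zero h0)
    rw [mul_add] at this
    omega

lemma sum_encode (hR : 6 ≤ R) (hd : 2 ^ (R + 6) ≤ d) (hα : 4 * α ≤ d) (hM : M + α = d + 3)
    {P : Multiset ℕ} (hQ : ∀ x ∈ P, IsQPart M x) (hP : d + 32 ≤ P.sum) :
    (encode d R M P).sum = P.sum := by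
  have := code_sum_le hR hd hα hM hQ hP
  rw [encode, Multiset.sum_add, Multiset.sum_replicate, smul_eq_mul, mul_one]
  omega

lemma le_of_mem_code (hd : 63 ≤ d) {P : Multiset ℕ} {x : ℕ} (hx : x ∈ code d R M P) :
    d + 2 ≤ x := by
  rcases Multiset.mem_add.mp hx with hx | hx
  · obtain ⟨j, hj, -, rfl⟩ := mem_smallCode hx
    have : 2 ^ 1 ≤ 2 ^ j := Nat.pow_le_pow_right (by norm_num) hj
    omega
  · obtain ⟨s, -, rfl⟩ := Multiset.mem_map.mp hx
    have := le_slot (R := R) hd (bigIndex M s)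
    unfold encodeBig
    omega

lemma mod_of_mem_code (hR : 0 < R) (hd : 2 ^ (R + 4) < d) {P : Multiset ℕ} {x : ℕ}
    (hx : x ∈ code d R M P) :
    x % (2 * d) = 1 ∨ ∃ j, 1 ≤ j ∧ j ≤ R + 4 ∧ x % (2 * d) = d + 2 ^ j := by
  rcases Multiset.mem_add.mp hx with hx | hx
  · obtain ⟨j, hj1, hj5, rfl⟩ := mem_smallCode hx
    have : 2 ^ j ≤ 2 ^ 5 := Nat.pow_le_pow_right (by norm_num) hj5
    have : 2 ^ 5 ≤ 2 ^ (R + 4) := Nat.pow_le_pow_right (by norm_num) (by omega)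
    exact .inr ⟨j, hj1, by omega, Nat.mod_eq_of_lt (by omega)⟩
  · obtain ⟨s, -, rfl⟩ := Multiset.mem_map.mp hx
    rcases slot_mod hR hd (bigIndex M s) with h | ⟨j, hj6, hj, h⟩
    · exact .inl h
    · exact .inr ⟨j, by omega, hj, h⟩

lemma code_injective (hR : 0 < R) (hd : 2 ^ (R + 6) ≤ d) (hM : 3 ≤ M) {P P' : Multiset ℕ}
    (hQ : ∀ x ∈ P, IsQPart M x) (hQ' : ∀ x ∈ P', IsQPart M x) (hsum : P.sum = P'.sum)
    (h : code d R M P = code d R M P') : P = P' := by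
  have : 2 ^ 6 ≤ d := le_trans (Nat.pow_le_pow_right (by norm_num) (by omega)) hd
  have hd4 : 2 ^ (R + 4) < d := lt_of_lt_of_le (Nat.pow_lt_pow_right (by norm_num) (by omega)) hd
  have hsmall : ∀ {a b x}, x ∈ smallCode d a b → x < d + 64 := fun hx => by
    obtain ⟨j, -, hj, rfl⟩ := mem_smallCode hx
    have : 2 ^ j ≤ 2 ^ 5 := Nat.pow_le_pow_right (by norm_num) hj
    omega
  have hbig : ∀ {Q : Multiset ℕ} {x}, x ∈ (bigParts M Q).map (encodeBig d R M) → ¬ x < d + 64 :=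
    fun hx => by
      obtain ⟨s, -, rfl⟩ := Multiset.mem_map.mp hx
      exact not_lt.mpr (le_slot (by omega) _)
  obtain ⟨hs, hb⟩ := eq_and_eq_of_add_eq_add (fun _ => hsmall) (fun _ => hsmall)
    (fun _ => hbig) (fun _ => hbig) h
  obtain ⟨ha, hb'⟩ := smallCode_injective hs
  have hB : bigParts M P = bigParts M P' := by
    refine eq_of_map_eq_of_injOn (encodeBig_injOn hR hd4 hM) ?_ ?_ hb
    · intro x hx
      exact ⟨hQ x (Multiset.mem_filter.mp hx).1, (Multiset.mem_filter.mp hx).2⟩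
    · intro x hx
      exact ⟨hQ' x (Multiset.mem_filter.mp hx).1, (Multiset.mem_filter.mp hx).2⟩
  have hc : P.count 1 = P'.count 1 := by
    have := sum_eq_of_isQPart hM hQ
    have := sum_eq_of_isQPart hM hQ'
    rw [ha, hb', hB] at *
    omega
  rw [eq_replicate_add_bigParts hM hQ, eq_replicate_add_bigParts hM hQ', hc, ha, hb', hB]

lemma pos_of_mem_encode (hd : 63 ≤ d) {P : Multiset ℕ} {x : ℕ} (hx : x ∈ encode d R M P) :
    0 < x := by
  rcases Multiset.mem_add.mp hx with hx | hx
  · have := le_of_mem_code hd hx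
    omega
  · rw [Multiset.eq_of_mem_replicate hx]
    exact Nat.one_pos

lemma encode_injective (hR : 0 < R) (hd : 2 ^ (R + 6) ≤ d) (hM : 3 ≤ M) {P P' : Multiset ℕ}
    (hQ : ∀ x ∈ P, IsQPart M x) (hQ' : ∀ x ∈ P', IsQPart M x) (hsum : P.sum = P'.sum)
    (h : encode d R M P = encode d R M P') : P = P' := by
  have : 2 ^ 6 ≤ d := le_trans (Nat.pow_le_pow_right (by norm_num) (by omega)) hd
  have hcode : ∀ {Q : Multiset ℕ} {x}, x ∈ code d R M Q → 1 < x := fun hx => by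
    have := le_of_mem_code (by omega) hx
    omega
  have hone : ∀ {k x}, x ∈ Multiset.replicate k 1 → ¬ 1 < x := fun hx => by
    rw [Multiset.eq_of_mem_replicate hx]
    exact lt_irrefl 1
  exact code_injective hR hd hM hQ hQ' hsum
    (eq_and_eq_of_add_eq_add (fun _ => hcode) (fun _ => hcode) (fun _ => hone) (fun _ => hone) h).1

def IsGParts (d r : ℕ) (s : Multiset ℕ) : Prop :=
  (∀ x ∈ s, x % (2 * d) = 1 ∨
      (∃ j, 1 ≤ j ∧ j ≤ r - 2 ∧ x % (2 * d) = d + 2 ^ j) ∨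
      x % (2 * d) = d + 2 ^ (r - 1)) ∧
    ∀ x ∈ s, x % (2 * d) = d + 2 ^ (r - 1) → s.count x ≤ 1

lemma isGParts_of_forall_mod {r : ℕ} (hr : 2 ≤ r) {s : Multiset ℕ}
    (h : ∀ x ∈ s, x % (2 * d) = 1 ∨ ∃ j, 1 ≤ j ∧ j ≤ r - 2 ∧ x % (2 * d) = d + 2 ^ j) :
    IsGParts d r s := by
  refine ⟨fun x hx => (h x hx).imp_right .inl, fun x hx hres => ?_⟩
  have : 2 ^ 1 ≤ 2 ^ (r - 1) := Nat.pow_le_pow_right (by norm_num) (by omega)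
  rcases h x hx with h1 | ⟨j, -, hj, hjx⟩
  · omega
  · have := Nat.pow_right_injective le_rfl (hjx.symm.trans hres |> Nat.add_left_cancel)
    omega

lemma isGParts_encode (hR : 0 < R) (hd : 2 ^ (R + 4) < d) (P : Multiset ℕ) :
    IsGParts d (R + 6) (encode d R M P) := by
  refine isGParts_of_forall_mod (by omega) fun x hx => ?_
  rcases Multiset.mem_add.mp hx with hx | hx
  · exact mod_of_mem_code hR hd hx
  · have : 0 < d := lt_of_le_of_lt (Nat.zero_le _) hd
    rw [Multiset.eq_of_mem_replicate hx]
    exact .inl (Nat.mod_eq_of_lt (by omega))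

lemma card_isQPart_le_card_isGParts {n : ℕ} (hR : 6 ≤ R) (hd : 2 ^ (R + 6) ≤ d)
    (hα : 4 * α ≤ d) (hM : M + α = d + 3) (hn : d + 32 ≤ n) :
    Nat.card {μ : n.Partition // ∀ x ∈ μ.parts, IsQPart M x}
      ≤ Nat.card {μ : n.Partition // IsGParts d (R + 6) μ.parts} := by
  have : 2 ^ 6 ≤ d := le_trans (Nat.pow_le_pow_right (by norm_num) (by omega)) hd
  have hd4 : 2 ^ (R + 4) < d := lt_of_lt_of_le (Nat.pow_lt_pow_right (by norm_num) (by omega)) hd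
  refine card_le_card_of_injOn (p := fun s => ∀ x ∈ s, IsQPart M x) (encode d R M)
    (fun _ _ _ => pos_of_mem_encode (by omega))
    (fun μ hμ => ?_) (fun _ _ => isGParts_encode (by omega) hd4 _)
    (fun μ ν hμ hν => encode_injective (by omega) hd (by omega) hμ hν
      (μ.parts_sum.trans ν.parts_sum.symm))
  rw [sum_encode hR hd hα hM hμ (μ.parts_sum.symm ▸ hn), μ.parts_sum]

end GDominatesQ

open GDominatesQ

theorem g_dominates_Q_general_general (α d n : ℕ)
    (hd : max (4 * α) (2 ^ 12 - 1) ≤ d) (hpow : ∀ r : ℕ, d ≠ 2 ^ r - 1)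
    (hn : 4 * d + 2 ^ (Nat.log 2 (d + 1)) ≤ n) :
    QNum 1 (d - α) n ≤ gNum d n := by
  obtain ⟨hα, hd12⟩ := max_le_iff.mp hd
  have hr : 12 ≤ Nat.log 2 (d + 1) :=
    (Nat.le_log_iff_pow_le (by norm_num) (by omega)).mpr (by omega)
  have hpow_le : 2 ^ Nat.log 2 (d + 1) ≤ d := by
    have := Nat.pow_log_le_self 2 (show d + 1 ≠ 0 by omega)
    have := hpow (Nat.log 2 (d + 1))
    omega
  obtain ⟨R, hR⟩ : ∃ R, Nat.log 2 (d + 1) = R + 6 := ⟨Nat.log 2 (d + 1) - 6, by omega⟩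
  have h4d : 4 * d ≤ n := le_trans (Nat.le_add_right _ _) hn
  show Nat.card {μ : n.Partition // ∀ x ∈ μ.parts, IsQPart (d - α + 3) x}
    ≤ Nat.card {μ : n.Partition // IsGParts d (Nat.log 2 (d + 1)) μ.parts}
  rw [hR] at hpow_le ⊢
  exact card_isQPart_le_card_isGParts (by omega) hpow_le hα (by omega) (by omega)

theorem g_dominates_Q_general (α d n : ℕ) (hα : 3 ≤ α)
    (hd : max (4 * α) (2 ^ 12 - 1) ≤ d) (hpow : ∀ r : ℕ, d ≠ 2 ^ r - 1)
    (hn : 4 * d + 2 ^ (Nat.log 2 (d + 1)) ≤ n) :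
    QNum 1 (d - α) n ≤ gNum d n :=
  g_dominates_Q_general_general α d n hd hpow hn
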